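/- Let G be a finite simple graph and let u be a vertex of G with N_G(u) ≠ ∅. Let G' be the graph obtained from G by deleting the closed neighbourhood N_G[u], adding a new vertex w adjacent exactly to those vertices of V(G) ∖ N_G[u] that have a neighbour (in G) in N_G(u), and adding a (possibly empty) set W of new vertices each adjacent only to w. If D is a connected vertex cover of G with N_G(u) ⊆ D, then (D ∖ N_G[u]) ∪ {w} is a connected vertex cover of G' of size at most |D| − |N_G(u)| + 1. -/

import Mathlib

/-!
Squash the closed neighbourhood `N[u]` to the single vertex `w` (here `none`): map every vertex of `N[u]`
to `w` and keep all other vertices. Every edge of `G` is then either contracted or sent to an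
edge of `G'`, because an edge leaving `N[u]` starts in `N(u)`, so its outer endpoint is a
neighbour of `w`. Hence the image of the connected set `D` is connected; it is a vertex cover
since the only edges of `G'` avoiding `w` are edges of `G`. As `D` meets `N[u]`, the image is
exactly `(D ∖ N[u]) ∪ {w}`, and `N(u) ⊆ D` gives the size bound.
-/

def IsVertexCover {V : Type*} (G : SimpleGraph V) (X : Set V) : Prop :=
  ∀ ⦃u v : V⦄, G.Adj u v → u ∈ X ∨ v ∈ X

def IsConnectedVertexCover {V : Type*} (G : SimpleGraph V) (X : Set V) : Prop :=
  IsVertexCover G X ∧ (G.induce X).Connected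

namespace SimpleGraph

variable {V V' : Type*} {G : SimpleGraph V} {H : SimpleGraph V'}

theorem Reachable.map_of_adj_imp_eq_or_adj {f : V → V'}
    (hf : ∀ ⦃x y⦄, G.Adj x y → f x = f y ∨ H.Adj (f x) (f y)) {x y : V}
    (h : G.Reachable x y) : H.Reachable (f x) (f y) := by
  rw [reachable_iff_reflTransGen] at h ⊢
  refine Relation.ReflTransGen.lift' f (fun a b hab => ?_) _ _ h
  show Relation.ReflTransGen H.Adj (f a) (f b)
  rcases hf hab with heq | hadj
  · exact heq ▸ .refl
  · exact .single hadj

theorem Connected.induce_image {f : V → V'} {s : Set V} (hs : (G.induce s).Connected)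
    (hf : ∀ x ∈ s, ∀ y ∈ s, G.Adj x y → f x = f y ∨ H.Adj (f x) (f y)) :
    (H.induce (f '' s)).Connected := by
  have : Nonempty s := hs.nonempty
  refine Connected.mk fun a b => ?_
  obtain ⟨x, rfl⟩ := Set.imageFactorization_surjective a
  obtain ⟨y, rfl⟩ := Set.imageFactorization_surjective b
  refine (hs x y).map_of_adj_imp_eq_or_adj fun x y hxy => ?_
  simpa [Set.imageFactorization, Subtype.ext_iff] using hf x x.2 y y.2 hxy

end SimpleGraph

section Squash

variable {V : Type*} (S : Set V) (W : Type*)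

open Classical in
noncomputable def squash (v : V) : Option ({v : V // v ∉ S} ⊕ W) :=
  if h : v ∈ S then none else some (Sum.inl ⟨v, h⟩)

variable {S W}

theorem squash_of_mem {v : V} (h : v ∈ S) : squash S W v = none := dif_pos h

theorem squash_of_notMem {v : V} (h : v ∉ S) : squash S W v = some (Sum.inl ⟨v, h⟩) :=
  dif_neg h

theorem image_squash {D : Set V} (hDS : (D ∩ S).Nonempty) :
    squash S W '' D = insert none ((fun a : {v : V // v ∉ S} =>
      (some (Sum.inl a) : Option ({v : V // v ∉ S} ⊕ W))) '' {a | ↑a ∈ D}) := by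
  obtain ⟨s, hsD, hsS⟩ := hDS
  ext z
  constructor
  · rintro ⟨v, hv, rfl⟩
    by_cases h : v ∈ S
    · exact .inl (squash_of_mem h)
    · exact .inr ⟨⟨v, h⟩, hv, (squash_of_notMem h).symm⟩
  · rintro (rfl | ⟨a, ha, rfl⟩)
    · exact ⟨s, hsD, squash_of_mem hsS⟩
    · exact ⟨a, ha, squash_of_notMem a.2⟩

theorem ncard_image_squash_le [Finite V] (D : Set V) :
    (squash S W '' D).ncard ≤ (D \ S).ncard + 1 := by
  have hsub : squash S W '' D ⊆ insert none (squash S W '' (D \ S)) := by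
    rintro _ ⟨v, hv, rfl⟩
    by_cases h : v ∈ S
    · rw [squash_of_mem h]
      exact Set.mem_insert _ _
    · exact .inr ⟨v, ⟨hv, h⟩, rfl⟩
  calc (squash S W '' D).ncard
      ≤ (insert none (squash S W '' (D \ S))).ncard := Set.ncard_le_ncard hsub
    _ ≤ (squash S W '' (D \ S)).ncard + 1 := Set.ncard_insert_le _ _
    _ ≤ (D \ S).ncard + 1 := by grw [Set.ncard_image_le]

theorem isVertexCover_image_squash {G : SimpleGraph V}
    {G' : SimpleGraph (Option ({v : V // v ∉ S} ⊕ W))}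
    (hold : ∀ a b : {v : V // v ∉ S}, G'.Adj (some (Sum.inl a)) (some (Sum.inl b)) → G.Adj a b)
    (hW : ∀ (x : W) z, ¬ G'.Adj (some (Sum.inr x)) (some z))
    {D : Set V} (hD : IsVertexCover G D) (hDS : (D ∩ S).Nonempty) :
    IsVertexCover G' (squash S W '' D) := by
  have hnone : none ∈ squash S W '' D := by
    rw [image_squash hDS]
    exact Set.mem_insert _ _
  rintro (_ | a | x) (_ | b | y) hab
  · exact .inl hnone
  · exact .inl hnone
  · exact .inl hnone
  · exact .inr hnone
  · rcases hD (hold a b hab) with ha | hb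
    · exact .inl ⟨a, ha, squash_of_notMem a.2⟩
    · exact .inr ⟨b, hb, squash_of_notMem b.2⟩
  · exact absurd hab.symm (hW y _)
  · exact .inr hnone
  · exact absurd hab (hW x _)
  · exact absurd hab (hW x _)

end Squash

theorem squash_closedNeighborSet_eq_or_adj {V W : Type*} {G : SimpleGraph V} {u : V}
    {G' : SimpleGraph (Option ({v : V // v ∉ insert u (G.neighborSet u)} ⊕ W))}
    (hold : ∀ a b : {v : V // v ∉ insert u (G.neighborSet u)},
      G.Adj a b → G'.Adj (some (Sum.inl a)) (some (Sum.inl b)))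
    (hw : ∀ a : {v : V // v ∉ insert u (G.neighborSet u)},
      (∃ c : V, G.Adj u c ∧ G.Adj a c) → G'.Adj (some (Sum.inl a)) none)
    {x y : V} (hxy : G.Adj x y) :
    squash (insert u (G.neighborSet u)) W x = squash (insert u (G.neighborSet u)) W y ∨
      G'.Adj (squash (insert u (G.neighborSet u)) W x)
        (squash (insert u (G.neighborSet u)) W y) := by
  have leaving : ∀ ⦃x y : V⦄, G.Adj x y → x ∈ insert u (G.neighborSet u) →
      (hy : y ∉ insert u (G.neighborSet u)) →
      G'.Adj (squash (insert u (G.neighborSet u)) W x) (some (Sum.inl ⟨y, hy⟩)) := by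
    intro x y hxy hx hy
    have hxu : x ≠ u := by
      rintro rfl
      exact hy (.inr hxy)
    rw [squash_of_mem hx]
    exact (hw ⟨y, hy⟩ ⟨x, hx.resolve_left hxu, hxy.symm⟩).symm
  by_cases hx : x ∈ insert u (G.neighborSet u) <;> by_cases hy : y ∈ insert u (G.neighborSet u)
  · exact .inl (by rw [squash_of_mem hx, squash_of_mem hy])
  · rw [squash_of_notMem hy]
    exact .inr (leaving hxy hx hy)
  · rw [squash_of_notMem hx]
    exact .inr (leaving hxy.symm hy hx).symm
  · rw [squash_of_notMem hx, squash_of_notMem hy]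
    exact .inr (hold ⟨x, hx⟩ ⟨y, hy⟩ hxy)

theorem stmt_10_general {V W : Type*} [Fintype V]
    (G : SimpleGraph V) (u : V) (hu : (G.neighborSet u).Nonempty)
    (G' : SimpleGraph (Option ({v : V // v ∉ insert u (G.neighborSet u)} ⊕ W)))
    (hold : ∀ a b : {v : V // v ∉ insert u (G.neighborSet u)},
      G'.Adj (some (Sum.inl a)) (some (Sum.inl b)) ↔ G.Adj ↑a ↑b)
    (hw : ∀ a : {v : V // v ∉ insert u (G.neighborSet u)},
      G'.Adj (some (Sum.inl a)) none ↔ ∃ c : V, G.Adj u c ∧ G.Adj ↑a c)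
    (hW2 : ∀ (x : W) (z : {v : V // v ∉ insert u (G.neighborSet u)} ⊕ W),
      ¬ G'.Adj (some (Sum.inr x)) (some z))
    (D : Set V) (hD : IsConnectedVertexCover G D) (hND : G.neighborSet u ⊆ D) :
    IsConnectedVertexCover G'
        (insert none ((fun a : {v : V // v ∉ insert u (G.neighborSet u)} =>
          (some (Sum.inl a) : Option ({v : V // v ∉ insert u (G.neighborSet u)} ⊕ W)))
            '' {a : {v : V // v ∉ insert u (G.neighborSet u)} | ↑a ∈ D})) ∧
      (insert none ((fun a : {v : V // v ∉ insert u (G.neighborSet u)} =>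
          (some (Sum.inl a) : Option ({v : V // v ∉ insert u (G.neighborSet u)} ⊕ W)))
            '' {a : {v : V // v ∉ insert u (G.neighborSet u)} | ↑a ∈ D})).ncard
        ≤ D.ncard - (G.neighborSet u).ncard + 1 := by
  obtain ⟨c, hc⟩ := hu
  have hDN : (D ∩ insert u (G.neighborSet u)).Nonempty := ⟨c, hND hc, .inr hc⟩
  rw [← image_squash hDN]
  refine ⟨⟨isVertexCover_image_squash (fun a b => (hold a b).mp) hW2 hD.1 hDN,
    hD.2.induce_image fun x _ y _ hxy =>
      squash_closedNeighborSet_eq_or_adj (fun a b => (hold a b).mpr) (fun a => (hw a).mpr) hxy⟩, ?_⟩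
  calc _ ≤ (D \ insert u (G.neighborSet u)).ncard + 1 := ncard_image_squash_le D
    _ ≤ (D \ G.neighborSet u).ncard + 1 := by
      gcongr
      · exact Set.toFinite _
      · exact Set.subset_insert u _
    _ = D.ncard - (G.neighborSet u).ncard + 1 := by rw [Set.ncard_sdiff hND]

/-- Let G be a finite simple graph and u a vertex with N_G(u) ≠ ∅. Let G'
be obtained from G by deleting the closed neighbourhood N_G[u], adding a new vertex w
(modelled as `none`) adjacent exactly to those remaining vertices having a G-neighbour in
N_G(u), and adding a (possibly empty) set W of new vertices each adjacent only to w. If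
D is a connected vertex cover of G with N_G(u) ⊆ D, then (D ∖ N_G[u]) ∪ {w} is a
connected vertex cover of G' of size at most |D| − |N_G(u)| + 1. -/
theorem stmt_10 {V W : Type*} [Fintype V] [DecidableEq V] [Fintype W] [DecidableEq W]
    (G : SimpleGraph V) (u : V) (hu : (G.neighborSet u).Nonempty)
    (G' : SimpleGraph (Option ({v : V // v ∉ insert u (G.neighborSet u)} ⊕ W)))
    (hold : ∀ a b : {v : V // v ∉ insert u (G.neighborSet u)},
      G'.Adj (some (Sum.inl a)) (some (Sum.inl b)) ↔ G.Adj ↑a ↑b)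
    (hw : ∀ a : {v : V // v ∉ insert u (G.neighborSet u)},
      G'.Adj (some (Sum.inl a)) none ↔ ∃ c : V, G.Adj u c ∧ G.Adj ↑a c)
    (hW1 : ∀ x : W, G'.Adj (some (Sum.inr x)) none)
    (hW2 : ∀ (x : W) (z : {v : V // v ∉ insert u (G.neighborSet u)} ⊕ W),
      ¬ G'.Adj (some (Sum.inr x)) (some z))
    (D : Set V) (hD : IsConnectedVertexCover G D) (hND : G.neighborSet u ⊆ D) :
    IsConnectedVertexCover G'
        (insert none ((fun a : {v : V // v ∉ insert u (G.neighborSet u)} =>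
          (some (Sum.inl a) : Option ({v : V // v ∉ insert u (G.neighborSet u)} ⊕ W)))
            '' {a : {v : V // v ∉ insert u (G.neighborSet u)} | ↑a ∈ D})) ∧
      (insert none ((fun a : {v : V // v ∉ insert u (G.neighborSet u)} =>
          (some (Sum.inl a) : Option ({v : V // v ∉ insert u (G.neighborSet u)} ⊕ W)))
            '' {a : {v : V // v ∉ insert u (G.neighborSet u)} | ↑a ∈ D})).ncard
        ≤ D.ncard - (G.neighborSet u).ncard + 1 :=
  stmt_10_general G u hu G' hold hw hW2 D hD hND
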